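/- For every r ∈ ℝ, the function s ↦ σ(s;r) is differentiable on (s₀, ∞) with ∂_s σ(s;r) = −s (r − R(s)) ∫₀¹ H_p(p;s)³ dp. -/

import Mathlib

open MeasureTheory Set Filter

noncomputable section

/-- `Omeg ω p = ∫₀^p ω(t) dt`, the primitive of the vorticity function. -/
def Omeg (ω : ℝ → ℝ) (p : ℝ) : ℝ := ∫ t in (0:ℝ)..p, ω t

/-- `s0 ω = sqrt (max_{p ∈ [0,1]} 2 Ω(p))`. -/
def s0 (ω : ℝ → ℝ) : ℝ := Real.sqrt (sSup ((fun p => 2 * Omeg ω p) '' Icc (0:ℝ) 1))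

/-- `Hp ω p s = (s² − 2Ω(p))^{-1/2}`. -/
def Hp (ω : ℝ → ℝ) (p s : ℝ) : ℝ := (Real.sqrt (s ^ 2 - 2 * Omeg ω p))⁻¹

/-- `Hfun ω p s = H(p; s) = ∫₀^p (s² − 2Ω(τ))^{-1/2} dτ`. -/
def Hfun (ω : ℝ → ℝ) (p s : ℝ) : ℝ := ∫ τ in (0:ℝ)..p, Hp ω τ s

/-- `dd ω s = d(s) = H(1; s)`. -/
def dd (ω : ℝ → ℝ) (s : ℝ) : ℝ := Hfun ω 1 s

/-- `RR ω s = R(s) = s²/2 − Ω(1) + d(s)`, the Bernoulli constant of the stream solution. -/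
def RR (ω : ℝ → ℝ) (s : ℝ) : ℝ := s ^ 2 / 2 - Omeg ω 1 + dd ω s

/-- `sigmaFun ω s r = σ(s; r)`. -/
def sigmaFun (ω : ℝ → ℝ) (s r : ℝ) : ℝ :=
  ∫ p in (0:ℝ)..1,
    (1 / (2 * (Hp ω p s) ^ 2) - Hfun ω p s - Omeg ω p + Omeg ω 1 + r) * Hp ω p s

/-- Partial derivative in the first (horizontal) variable `q`. -/
def dq (f : ℝ → ℝ → ℝ) (q p : ℝ) : ℝ := deriv (fun x => f x p) q

/-- Partial derivative in the second (vertical) variable `p`. -/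
def dp (f : ℝ → ℝ → ℝ) (q p : ℝ) : ℝ := deriv (fun y => f q y) p

/-- The height system with Bernoulli constant `r` on the strip `S = ℝ × [0,1]`. -/
structure HeightSol (ω : ℝ → ℝ) (r : ℝ) (h : ℝ → ℝ → ℝ) : Prop where
  smooth : ContDiff ℝ 2 (Function.uncurry h)
  hp_pos : ∀ q : ℝ, ∀ p ∈ Icc (0:ℝ) 1, 0 < dp h q p
  pde : ∀ q : ℝ, ∀ p ∈ Icc (0:ℝ) 1,
    (1 + (dq h q p) ^ 2) / (dp h q p) ^ 2 * dp (dp h) q p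
      - 2 * (dq h q p) / (dp h q p) * dp (dq h) q p
      + dq (dq h) q p - ω p * dp h q p = 0
  top : ∀ q : ℝ, (1 + (dq h q 1) ^ 2) / (2 * (dp h q 1) ^ 2) + h q 1 = r
  bot : ∀ q : ℝ, h q 0 = 0

/-- The flow force of a height function `h`, computed on the vertical line through `q`. -/
def flowForce (ω : ℝ → ℝ) (r : ℝ) (h : ℝ → ℝ → ℝ) (q : ℝ) : ℝ :=
  ∫ p in (0:ℝ)..1,
    ((1 - (dq h q p) ^ 2) / (2 * (dp h q p) ^ 2) - h q p - Omeg ω p + Omeg ω 1 + r) * dp h q p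

/-- `wfun ω s h = w^{(s)} = h − H(·; s)`. -/
def wfun (ω : ℝ → ℝ) (s : ℝ) (h : ℝ → ℝ → ℝ) (q p : ℝ) : ℝ := h q p - Hfun ω p s

/-- The flow force flux function `Φ^{(s)}`. -/
def Phi (ω : ℝ → ℝ) (s : ℝ) (h : ℝ → ℝ → ℝ) (q p : ℝ) : ℝ :=
  ∫ p' in (0:ℝ)..p,
    ((dp (wfun ω s h) q p') ^ 2 / (dp h q p' * (Hp ω p' s) ^ 2)
      - (dq (wfun ω s h) q p') ^ 2 / dp h q p')

/-- `h ∈ C^{2,γ}(S̄)`: `h` is twice continuously differentiable, all partial derivatives of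
order ≤ 2 are bounded on the strip, and the second-order derivatives are uniformly
γ-Hölder continuous on the strip. -/
def C2Holder (γ : ℝ) (h : ℝ → ℝ → ℝ) : Prop :=
  ContDiff ℝ 2 (Function.uncurry h) ∧
  (∀ g ∈ ([h, dq h, dp h, dq (dq h), dp (dq h), dp (dp h)] : List (ℝ → ℝ → ℝ)),
    ∃ M : ℝ, ∀ q : ℝ, ∀ p ∈ Icc (0:ℝ) 1, |g q p| ≤ M) ∧
  (∀ g ∈ ([dq (dq h), dp (dq h), dp (dp h)] : List (ℝ → ℝ → ℝ)),
    ∃ C : ℝ, ∀ q q' : ℝ, ∀ p ∈ Icc (0:ℝ) 1, ∀ p' ∈ Icc (0:ℝ) 1,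
      |g q p - g q' p'| ≤ C * Real.sqrt ((q - q') ^ 2 + (p - p') ^ 2) ^ γ)

end

/-! Since `H_p = (s² − 2Ω)^{-1/2}`, the integrand of `σ` equals
`√(s² − 2Ω) − H H_p + (Ω(1) + r − s²/2) H_p`, and `H H_p = ∂_p (H²/2)`, so
`σ(s) = ∫₀¹ √(s² − 2Ω) − d²/2 + (Ω(1) + r − s²/2) d`. Near `s > s₀` the quantity `s² − 2Ω`
stays bounded away from `0` on `[0,1]`, so both integrals may be differentiated under the
integral sign: `∂_s ∫₀¹ √(s² − 2Ω) = s d` and `d' = −s ∫₀¹ H_p³`. The two terms `± s d` cancel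
and what is left is `d' (Ω(1) + r − s²/2 − d) = d' (r − R)`. -/

open Metric Topology

theorem intervalIntegral.hasDerivAt_integral_of_continuousOn_deriv {F F' : ℝ → ℝ → ℝ}
    {a b x₀ ε : ℝ} (hε : 0 < ε)
    (hF : ∀ x ∈ closedBall x₀ ε, ContinuousOn (F x) (uIcc a b))
    (hF' : ContinuousOn (Function.uncurry F') (closedBall x₀ ε ×ˢ uIcc a b))
    (hderiv : ∀ x ∈ closedBall x₀ ε, ∀ p ∈ uIcc a b, HasDerivAt (F · p) (F' x p) x) :
    HasDerivAt (fun x => ∫ p in a..b, F x p) (∫ p in a..b, F' x₀ p) x₀ := by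
  obtain ⟨M, hM⟩ :=
    ((isCompact_closedBall x₀ ε).prod isCompact_uIcc).exists_bound_of_continuousOn hF'
  have hx₀ : x₀ ∈ closedBall x₀ ε := mem_closedBall_self hε.le
  have hF'x₀ : ContinuousOn (F' x₀) (uIcc a b) :=
    hF'.comp (f := (x₀, ·)) (by fun_prop) fun _ hp => ⟨hx₀, hp⟩
  refine (hasDerivAt_integral_of_dominated_loc_of_deriv_le (bound := fun _ => M)
    (closedBall_mem_nhds x₀ hε) ?_ (hF x₀ hx₀).intervalIntegrable
    ((hF'x₀.mono uIoc_subset_uIcc).aestronglyMeasurable measurableSet_uIoc) ?_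
    intervalIntegrable_const ?_).2
  · filter_upwards [closedBall_mem_nhds x₀ hε] with x hx
    exact ((hF x hx).mono uIoc_subset_uIcc).aestronglyMeasurable measurableSet_uIoc
  · exact .of_forall fun p hp x hx => hM (x, p) ⟨hx, uIoc_subset_uIcc hp⟩
  · exact .of_forall fun p hp x hx => hderiv x hx p (uIoc_subset_uIcc hp)

section Vorticity

variable {ω : ℝ → ℝ}

lemma continuous_Omeg (hω : Continuous ω) : Continuous (Omeg ω) :=
  intervalIntegral.continuous_primitive (fun _ _ => hω.intervalIntegrable _ _) 0

lemma two_mul_Omeg_le_s0_sq (hω : Continuous ω) {p : ℝ} (hp : p ∈ Icc (0:ℝ) 1) :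
    2 * Omeg ω p ≤ s0 ω ^ 2 := by
  set S := (fun p => 2 * Omeg ω p) '' Icc (0:ℝ) 1
  have hS : BddAbove S :=
    (isCompact_Icc.image (continuous_const.mul (continuous_Omeg hω))).bddAbove
  have hzero : (0:ℝ) ∈ S := ⟨0, left_mem_Icc.2 zero_le_one, by simp [Omeg]⟩
  rw [s0, Real.sq_sqrt (le_csSup hS hzero)]
  exact le_csSup hS ⟨p, hp, rfl⟩

lemma two_mul_Omeg_lt_sq (hω : Continuous ω) {s p : ℝ} (hs : s0 ω < s)
    (hp : p ∈ Icc (0:ℝ) 1) : 2 * Omeg ω p < s ^ 2 :=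
  (two_mul_Omeg_le_s0_sq hω hp).trans_lt
    (pow_lt_pow_left₀ hs (Real.sqrt_nonneg _) two_ne_zero)

lemma hasDerivAt_integral_comp_sq_sub_two_mul_Omeg {ψ ψ' : ℝ → ℝ}
    (hψ : ∀ y > 0, HasDerivAt ψ (ψ' y) y) (hψ' : ContinuousOn ψ' (Ioi 0))
    (hω : Continuous ω) {s : ℝ} (hs : s0 ω < s) :
    HasDerivAt (fun x => ∫ p in (0:ℝ)..1, ψ (x ^ 2 - 2 * Omeg ω p))
      (∫ p in (0:ℝ)..1, ψ' (s ^ 2 - 2 * Omeg ω p) * (2 * s)) s := by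
  have hpos : ∀ x ∈ closedBall s ((s - s0 ω) / 2), ∀ p ∈ uIcc (0:ℝ) 1,
      0 < x ^ 2 - 2 * Omeg ω p := by
    intro x hx p hp
    rw [mem_closedBall, Real.dist_eq, abs_le] at hx
    rw [uIcc_of_le zero_le_one] at hp
    exact sub_pos.2 (two_mul_Omeg_lt_sq hω (by linarith [hx.1]) hp)
  have hΩ := continuous_Omeg hω
  refine intervalIntegral.hasDerivAt_integral_of_continuousOn_deriv
    (F' := fun x p => ψ' (x ^ 2 - 2 * Omeg ω p) * (2 * x)) (ε := (s - s0 ω) / 2)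
    (by linarith) ?_ ?_ ?_
  · exact fun x hx p hp => ContinuousAt.comp_continuousWithinAt
      (f := fun p => x ^ 2 - 2 * Omeg ω p) (hψ _ (hpos x hx p hp)).continuousAt (by fun_prop)
  · exact (hψ'.comp (by fun_prop) fun z hz => hpos z.1 hz.1 z.2 hz.2).mul (by fun_prop)
  · exact fun x hx p hp => ((hψ _ (hpos x hx p hp)).comp x
      ((hasDerivAt_pow 2 x).sub_const _)).congr_deriv (by ring)

lemma hasDerivAt_integral_sqrt_sq_sub_two_mul_Omeg (hω : Continuous ω) {s : ℝ}
    (hs : s0 ω < s) :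
    HasDerivAt (fun x => ∫ p in (0:ℝ)..1, √(x ^ 2 - 2 * Omeg ω p)) (s * dd ω s) s := by
  refine (hasDerivAt_integral_comp_sq_sub_two_mul_Omeg (ψ' := fun y => 1 / (2 * √y))
    (fun y hy => Real.hasDerivAt_sqrt hy.ne') ?_ hω hs).congr_deriv ?_
  · exact continuousOn_const.div (by fun_prop) fun y (hy : 0 < y) => by positivity
  · rw [dd, Hfun, ← intervalIntegral.integral_const_mul]
    refine intervalIntegral.integral_congr fun p _ => ?_
    simp only [Hp]
    ring

lemma hasDerivAt_dd (hω : Continuous ω) {s : ℝ} (hs : s0 ω < s) :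
    HasDerivAt (dd ω) (-s * ∫ p in (0:ℝ)..1, Hp ω p s ^ 3) s := by
  refine (hasDerivAt_integral_comp_sq_sub_two_mul_Omeg
    (ψ' := fun y => -(1 / (2 * √y)) / √y ^ 2)
    (fun y hy => (Real.hasDerivAt_sqrt hy.ne').inv (Real.sqrt_pos.2 hy).ne') ?_ hω hs
    ).congr_deriv ?_
  · exact (continuousOn_const.div (by fun_prop) fun y (hy : 0 < y) => by positivity).neg.div
      (by fun_prop) fun y (hy : 0 < y) => by positivity
  · rw [← intervalIntegral.integral_const_mul]
    refine intervalIntegral.integral_congr fun p _ => ?_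
    simp only [Hp]
    field_simp

lemma continuousOn_Hp (hω : Continuous ω) (s : ℝ) :
    ContinuousOn (Hp ω · s) {p | 2 * Omeg ω p < s ^ 2} := by
  have hΩ := continuous_Omeg hω
  exact (Continuous.continuousOn (by fun_prop)).inv₀ fun p hp =>
    (Real.sqrt_pos.2 (sub_pos.2 hp)).ne'

lemma hasDerivAt_Hfun (hω : Continuous ω) {s p : ℝ} (hs : s0 ω < s)
    (hp : p ∈ Icc (0:ℝ) 1) :
    HasDerivAt (Hfun ω · s) (Hp ω p s) p := by
  have hU : IsOpen {q | 2 * Omeg ω q < s ^ 2} :=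
    isOpen_lt (continuous_const.mul (continuous_Omeg hω)) continuous_const
  have hsub : Icc (0:ℝ) 1 ⊆ {q | 2 * Omeg ω q < s ^ 2} :=
    fun _ hq => two_mul_Omeg_lt_sq hω hs hq
  have hint : IntervalIntegrable (Hp ω · s) volume 0 p := by
    refine ((continuousOn_Hp hω s).mono (hsub.trans' ?_)).intervalIntegrable
    rw [uIcc_of_le hp.1]
    exact Icc_subset_Icc_right hp.2
  exact intervalIntegral.integral_hasDerivAt_right hint
    ((continuousOn_Hp hω s).stronglyMeasurableAtFilter hU p (hsub hp))
    ((continuousOn_Hp hω s).continuousAt (hU.mem_nhds (hsub hp)))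

lemma continuousOn_Hfun_mul_Hp (hω : Continuous ω) {s : ℝ} (hs : s0 ω < s) :
    ContinuousOn (fun p => Hfun ω p s * Hp ω p s) (uIcc 0 1) := by
  rw [uIcc_of_le zero_le_one]
  have hHfun : ContinuousOn (Hfun ω · s) (Icc 0 1) :=
    fun p hp => (hasDerivAt_Hfun hω hs hp).continuousAt.continuousWithinAt
  exact hHfun.mul ((continuousOn_Hp hω s).mono fun _ hq => two_mul_Omeg_lt_sq hω hs hq)

lemma integral_Hfun_mul_Hp (hω : Continuous ω) {s : ℝ} (hs : s0 ω < s) :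
    ∫ p in (0:ℝ)..1, Hfun ω p s * Hp ω p s = dd ω s ^ 2 / 2 := by
  have hderiv : ∀ p ∈ uIcc (0:ℝ) 1, HasDerivAt (fun q => Hfun ω q s ^ 2 / 2)
      (Hfun ω p s * Hp ω p s) p := by
    intro p hp
    rw [uIcc_of_le zero_le_one] at hp
    exact (((hasDerivAt_Hfun hω hs hp).pow 2).div_const 2).congr_deriv (by ring)
  rw [intervalIntegral.integral_eq_sub_of_hasDerivAt hderiv
    (continuousOn_Hfun_mul_Hp hω hs).intervalIntegrable]
  simp [dd, Hfun]

lemma sigmaFun_eq (hω : Continuous ω) (r : ℝ) {s : ℝ} (hs : s0 ω < s) :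
    sigmaFun ω s r = (∫ p in (0:ℝ)..1, √(s ^ 2 - 2 * Omeg ω p))
      - dd ω s ^ 2 / 2 + (Omeg ω 1 + r - s ^ 2 / 2) * dd ω s := by
  have hΩ := continuous_Omeg hω
  have hsqrt : IntervalIntegrable (fun p => √(s ^ 2 - 2 * Omeg ω p)) volume 0 1 :=
    (by fun_prop : Continuous _).intervalIntegrable 0 1
  have hHp : IntervalIntegrable (Hp ω · s) volume 0 1 := by
    refine ((continuousOn_Hp hω s).mono fun q hq => ?_).intervalIntegrable
    exact two_mul_Omeg_lt_sq hω hs (by rwa [uIcc_of_le zero_le_one] at hq)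
  have hintegrand : EqOn
      (fun p => (1 / (2 * Hp ω p s ^ 2) - Hfun ω p s - Omeg ω p + Omeg ω 1 + r) * Hp ω p s)
      (fun p => √(s ^ 2 - 2 * Omeg ω p) - Hfun ω p s * Hp ω p s
        + (Omeg ω 1 + r - s ^ 2 / 2) * Hp ω p s) (uIcc 0 1) := by
    intro p hp
    rw [uIcc_of_le zero_le_one] at hp
    have hA := sub_pos.2 (two_mul_Omeg_lt_sq hω hs hp)
    have := (Real.sqrt_pos.2 hA).ne'
    simp only [Hp]
    field_simp
    rw [Real.sq_sqrt hA.le]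
    ring
  rw [sigmaFun, intervalIntegral.integral_congr hintegrand,
    intervalIntegral.integral_add (hsqrt.sub (continuousOn_Hfun_mul_Hp hω hs).intervalIntegrable)
      (hHp.const_mul _),
    intervalIntegral.integral_sub hsqrt (continuousOn_Hfun_mul_Hp hω hs).intervalIntegrable,
    integral_Hfun_mul_Hp hω hs, intervalIntegral.integral_const_mul, dd, Hfun]

end Vorticity

/-- for every `r`, `s ↦ σ(s;r)` is differentiable on `(s₀, ∞)` with
`∂_s σ(s;r) = −s (r − R(s)) ∫₀¹ H_p(p;s)³ dp`. -/
theorem stmt7 (ω : ℝ → ℝ) (hω : Continuous ω) (r : ℝ) :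
    ∀ s ∈ Ioi (s0 ω),
      HasDerivAt (fun s' => sigmaFun ω s' r)
        (-s * (r - RR ω s) * ∫ p in (0:ℝ)..1, (Hp ω p s) ^ 3) s := by
  intro s hs
  have hdd := hasDerivAt_dd hω hs
  have hrhs := ((hasDerivAt_integral_sqrt_sq_sub_two_mul_Omeg hω hs).sub
    ((hdd.pow 2).div_const 2)).add
    ((((hasDerivAt_pow 2 s).div_const 2).const_sub (Omeg ω 1 + r)).mul hdd)
  have hσ : (fun s' => sigmaFun ω s' r) =ᶠ[𝓝 s] fun x => (∫ p in (0:ℝ)..1,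
      √(x ^ 2 - 2 * Omeg ω p)) - dd ω x ^ 2 / 2 + (Omeg ω 1 + r - x ^ 2 / 2) * dd ω x := by
    filter_upwards [isOpen_Ioi.mem_nhds hs] with x hx using sigmaFun_eq hω r hx
  refine (hrhs.congr_of_eventuallyEq hσ).congr_deriv ?_
  rw [RR]
  push_cast
  ring
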